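/- Let C1 and C2 be F-linear triangulated categories equipped with weight structures, r : C1 → C2 an F-linear exact (triangulated) functor which is weight exact and whose induced functor r_{w=0} on hearts is full. In the situation of the proof of Theorem 0C: if M ∈ C1 admits a minimal weight filtration M_{≤-1} → M → M_{≥0} →(δ) M_{≤-1}[1] concentrated at 0 and r(M) = 0, then r(M_{≤-1}) = 0 and r(M_{≥0}) = 0. (The point being that r(δ), being simultaneously an isomorphism by the exact triangle and an element of the radical of C2, forces both objects to vanish.) -/

import Mathlib

open CategoryTheory CategoryTheory.Limits CategoryTheory.Pretriangulated

namespace Paper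

/-- A morphism `f : X ⟶ Y` belongs to the radical of a preadditive category if,
for every `g : Y ⟶ X`, the endomorphism `𝟙 X - g ∘ f` is invertible. -/
def InRadical {C : Type*} [Category C] [Preadditive C] {X Y : C} (f : X ⟶ Y) : Prop :=
  ∀ g : Y ⟶ X, IsIso (𝟙 X - f ≫ g)

/-- The Jacobson radical of a (possibly noncommutative) ring, as a two-sided ideal. -/
def ringRadical (R : Type*) [Ring R] : TwoSidedIdeal R :=
  TwoSidedIdeal.jacobson ⊥

/-- A ring is semi-primary if its (Jacobson) radical is nilpotent and the quotient by
the radical is a semisimple ring. -/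
def IsSemiprimaryRing (R : Type*) [Ring R] : Prop :=
  IsSemisimpleRing (ringRadical R).ringCon.Quotient ∧
    ∃ n : ℕ, ∀ f : Fin n → R, (∀ i, f i ∈ ringRadical R) → (List.ofFn f).prod = 0

/-- A class of objects of a preadditive category is semi-primary (André–Kahn) if the
endomorphism ring of each of its objects is a semi-primary ring; for an object `X`,
the radical ideal `rad(X,X)` is exactly the Jacobson radical of `End X`. -/
def SemiprimaryOn {C : Type*} [Category C] [Preadditive C] (P : Set C) : Prop :=
  ∀ X : C, X ∈ P → IsSemiprimaryRing (CategoryTheory.End X)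

/-- A class of objects is pseudo-Abelian (idempotent complete) if every idempotent
endomorphism of one of its objects splits through an object of the class. -/
def PseudoAbelianOn {C : Type*} [Category C] [Preadditive C] (P : Set C) : Prop :=
  ∀ X : C, X ∈ P → ∀ e : X ⟶ X, e ≫ e = e →
    ∃ (Y : C) (_ : Y ∈ P) (p : X ⟶ Y) (i : Y ⟶ X), p ≫ i = e ∧ i ≫ p = 𝟙 Y

variable (C : Type*) [Category C] [Preadditive C] [HasZeroObject C] [HasShift C ℤ]
  [∀ n : ℤ, (CategoryTheory.shiftFunctor C n).Additive] [Pretriangulated C]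

/-- A weight structure on a pretriangulated category: classes `le = C_{w≤0}` and
`ge = C_{w≥0}`, additive (containing zero objects, closed under finite direct sums)
and closed under retracts, with `C_{w≤0} ⊆ C_{w≤1}`, `C_{w≥1} ⊆ C_{w≥0}`,
orthogonality, and existence of weight decompositions. -/
structure WeightStructure where
  le : Set C
  ge : Set C
  le_retract : ∀ {X Y : C} (i : X ⟶ Y) (p : Y ⟶ X), i ≫ p = 𝟙 X → Y ∈ le → X ∈ le
  ge_retract : ∀ {X Y : C} (i : X ⟶ Y) (p : Y ⟶ X), i ≫ p = 𝟙 X → Y ∈ ge → X ∈ ge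
  le_zero : ∀ X : C, IsZero X → X ∈ le
  ge_zero : ∀ X : C, IsZero X → X ∈ ge
  le_add : ∀ {X Y : C} (b : BinaryBicone X Y), b.IsBilimit → X ∈ le → Y ∈ le → b.pt ∈ le
  ge_add : ∀ {X Y : C} (b : BinaryBicone X Y), b.IsBilimit → X ∈ ge → Y ∈ ge → b.pt ∈ ge
  le_shift : ∀ X : C, X ∈ le → X⟦(-1 : ℤ)⟧ ∈ le
  ge_shift : ∀ X : C, X ∈ ge → X⟦(1 : ℤ)⟧ ∈ ge
  orthogonal : ∀ {X Y : C}, X ∈ le → Y⟦(-1 : ℤ)⟧ ∈ ge → ∀ f : X ⟶ Y, f = 0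
  exists_decomp : ∀ M : C, ∃ (A B : C) (f : A ⟶ M) (g : M ⟶ B) (h : B ⟶ A⟦(1 : ℤ)⟧),
    (Triangle.mk f g h ∈ distTriang C) ∧ A ∈ le ∧ B⟦(-1 : ℤ)⟧ ∈ ge

namespace WeightStructure

variable {C} (w : WeightStructure C)

/-- `C_{w ≤ n} := C_{w ≤ 0}[n]`. -/
def leN (n : ℤ) : Set C := {X : C | X⟦-n⟧ ∈ w.le}

/-- `C_{w ≥ n} := C_{w ≥ 0}[n]`. -/
def geN (n : ℤ) : Set C := {X : C | X⟦-n⟧ ∈ w.ge}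

/-- The heart `C_{w = 0} = C_{w ≤ 0} ∩ C_{w ≥ 0}`. -/
def heart : Set C := w.leN 0 ∩ w.geN 0

/-- The weight structure is bounded if every object lies in
`C_{w ≥ m} ∩ C_{w ≤ n}` for some integers `m ≤ n`. -/
def Bounded : Prop := ∀ M : C, ∃ m n : ℤ, m ≤ n ∧ M ∈ w.geN m ∧ M ∈ w.leN n

end WeightStructure

/-- A weight filtration of `M` concentrated at `n`: an exact triangle
`M_{≤ n-1} ⟶ M ⟶ M_{≥ n} ⟶(δ) M_{≤ n-1}[1]` with the two outer terms in
`C_{w ≤ n-1}` and `C_{w ≥ n}` respectively. -/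
def IsWeightFiltrationAt {C : Type*} [Category C] [Preadditive C] [HasZeroObject C]
    [HasShift C ℤ] [∀ n : ℤ, (CategoryTheory.shiftFunctor C n).Additive] [Pretriangulated C]
    (w : WeightStructure C) (n : ℤ) {A M B : C}
    (f : A ⟶ M) (g : M ⟶ B) (δ : B ⟶ A⟦(1 : ℤ)⟧) : Prop :=
  (Triangle.mk f g δ ∈ distTriang C) ∧ A ∈ w.leN (n - 1) ∧ B ∈ w.geN n

/-- A minimal weight filtration concentrated at `n`: a weight filtration concentrated
at `n` whose connecting morphism lies in the radical. -/
def IsMinimalWeightFiltrationAt {C : Type*} [Category C] [Preadditive C] [HasZeroObject C]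
    [HasShift C ℤ] [∀ n : ℤ, (CategoryTheory.shiftFunctor C n).Additive] [Pretriangulated C]
    (w : WeightStructure C) (n : ℤ) {A M B : C}
    (f : A ⟶ M) (g : M ⟶ B) (δ : B ⟶ A⟦(1 : ℤ)⟧) : Prop :=
  IsWeightFiltrationAt w n f g δ ∧ InRadical δ

/-- `M` is without weights `α, α+1, …, β` if it admits a weight filtration avoiding
these weights. -/
def WithoutWeights {C : Type*} [Category C] [Preadditive C] [HasZeroObject C]
    [HasShift C ℤ] [∀ n : ℤ, (CategoryTheory.shiftFunctor C n).Additive] [Pretriangulated C]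
    (w : WeightStructure C) (α β : ℤ) (M : C) : Prop :=
  ∃ (A B : C) (f : A ⟶ M) (g : M ⟶ B) (δ : B ⟶ A⟦(1 : ℤ)⟧),
    (Triangle.mk f g δ ∈ distTriang C) ∧ A ∈ w.leN (α - 1) ∧ B ∈ w.geN (β + 1)

/-- A functor is weight exact if it respects both classes of the weight structures. -/
def WeightExact {C₁ : Type*} [Category C₁] [Preadditive C₁] [HasZeroObject C₁] [HasShift C₁ ℤ]
    [∀ n : ℤ, (CategoryTheory.shiftFunctor C₁ n).Additive] [Pretriangulated C₁]
    {C₂ : Type*} [Category C₂] [Preadditive C₂] [HasZeroObject C₂] [HasShift C₂ ℤ]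
    [∀ n : ℤ, (CategoryTheory.shiftFunctor C₂ n).Additive] [Pretriangulated C₂]
    (w₁ : WeightStructure C₁) (w₂ : WeightStructure C₂) (r : C₁ ⥤ C₂) : Prop :=
  (∀ X : C₁, X ∈ w₁.le → r.obj X ∈ w₂.le) ∧ (∀ X : C₁, X ∈ w₁.ge → r.obj X ∈ w₂.ge)


/-!
Since `r M = 0`, the triangle shows that `r δ` is an isomorphism. Weight exactness and fullness
on the heart make `r` full on morphisms from `C_{w≤0}` to `C_{w≥0}`, so `(r δ)⁻¹ = r g` for some
`g : A⟦1⟧ ⟶ B`. As `δ` lies in the radical, `𝟙 - δ ≫ g` is invertible, yet `r` sends it to `0`;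
hence `r B = 0`, and then `r A = 0` by the triangle.
-/

section

variable {C : Type*} [Category C] [Preadditive C] [HasZeroObject C] [HasShift C ℤ]
  [∀ n : ℤ, (CategoryTheory.shiftFunctor C n).Additive] [Pretriangulated C]

lemma distinguished_mk_of_iso₂ (T : Triangle C) (hT : T ∈ distTriang C) {X : C}
    (e : T.obj₂ ≅ X) : Triangle.mk (T.mor₁ ≫ e.hom) (e.inv ≫ T.mor₂) T.mor₃ ∈ distTriang C :=
  -- `simp` cannot see through the `Triangle.mk` projections in the morphism types,
  -- hence the `change`s
  isomorphic_distinguished _ hT _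
    (Triangle.isoMk _ _ (Iso.refl T.obj₁) e.symm (Iso.refl T.obj₃)
      (by change (T.mor₁ ≫ e.hom) ≫ e.inv = 𝟙 T.obj₁ ≫ T.mor₁; simp)
      (by change (e.inv ≫ T.mor₂) ≫ 𝟙 T.obj₃ = e.inv ≫ T.mor₂; simp)
      (by change T.mor₃ ≫ (𝟙 T.obj₁)⟦(1 : ℤ)⟧' = 𝟙 T.obj₃ ≫ T.mor₃; simp))

namespace WeightStructure

variable (w : WeightStructure C)

lemma mem_le_of_iso {X Y : C} (e : X ≅ Y) (h : Y ∈ w.le) : X ∈ w.le :=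
  w.le_retract e.hom e.inv e.hom_inv_id h

lemma mem_ge_of_iso {X Y : C} (e : X ≅ Y) (h : Y ∈ w.ge) : X ∈ w.ge :=
  w.ge_retract e.hom e.inv e.hom_inv_id h

lemma mem_leN_zero_iff {X : C} : X ∈ w.leN 0 ↔ X ∈ w.le := by
  have e : X⟦-(0 : ℤ)⟧ ≅ X := (shiftFunctorZero' C (-(0 : ℤ)) neg_zero).app X
  exact ⟨w.mem_le_of_iso e.symm, w.mem_le_of_iso e⟩

lemma mem_geN_zero_iff {X : C} : X ∈ w.geN 0 ↔ X ∈ w.ge := by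
  have e : X⟦-(0 : ℤ)⟧ ≅ X := (shiftFunctorZero' C (-(0 : ℤ)) neg_zero).app X
  exact ⟨w.mem_ge_of_iso e.symm, w.mem_ge_of_iso e⟩

lemma mem_heart_iff {X : C} : X ∈ w.heart ↔ X ∈ w.le ∧ X ∈ w.ge :=
  and_congr w.mem_leN_zero_iff w.mem_geN_zero_iff

lemma hom_eq_zero_of_shift_mem_le {X Y : C} (hX : X⟦(1 : ℤ)⟧ ∈ w.le) (hY : Y ∈ w.ge)
    (f : X ⟶ Y) : f = 0 := by
  have hY' : Y⟦(1 : ℤ)⟧⟦(-1 : ℤ)⟧ ∈ w.ge :=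
    w.mem_ge_of_iso ((shiftFunctorCompIsoId C (1 : ℤ) (-1) (by norm_num)).app Y) hY
  apply (shiftFunctor C (1 : ℤ)).map_injective
  rw [Functor.map_zero]
  exact w.orthogonal hX hY' _

/-- The weight decomposition of `X` with respect to the weights `≤ -1` and `≥ 0`. -/
lemma exists_distTriang_shift_mem_le_mem_ge (X : C) :
    ∃ (X' X'' : C) (a : X' ⟶ X) (b : X ⟶ X'') (c : X'' ⟶ X'⟦(1 : ℤ)⟧),
      Triangle.mk a b c ∈ distTriang C ∧ X'⟦(1 : ℤ)⟧ ∈ w.le ∧ X'' ∈ w.ge := by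
  obtain ⟨X₀, Y₀, u, v, s, hT, hX₀, hY₀⟩ := w.exists_decomp (X⟦(1 : ℤ)⟧)
  have hX₀' : X₀⟦(-1 : ℤ)⟧⟦(1 : ℤ)⟧ ∈ w.le :=
    w.mem_le_of_iso ((shiftFunctorCompIsoId C (-1 : ℤ) 1 (by norm_num)).app X₀) hX₀
  exact ⟨_, _, _, _, _, distinguished_mk_of_iso₂ _
    (Triangle.shift_distinguished _ hT (-1))
    ((shiftFunctorCompIsoId C (1 : ℤ) (-1) (by norm_num)).app X), hX₀', hY₀⟩

lemma mem_le_of_forall_hom_eq_zero {X : C}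
    (h : ∀ (Y : C), Y⟦(-1 : ℤ)⟧ ∈ w.ge → ∀ f : X ⟶ Y, f = 0) : X ∈ w.le := by
  obtain ⟨A, B, a, b, c, hT, hA, hB⟩ := w.exists_decomp X
  obtain ⟨s, hs⟩ := Triangle.coyoneda_exact₂ _ hT (𝟙 X)
    (by change 𝟙 X ≫ b = 0; rw [h B hB b, comp_zero])
  exact w.le_retract s a hs.symm hA

lemma mem_ge_of_forall_hom_eq_zero {X : C}
    (h : ∀ (Z : C), Z⟦(1 : ℤ)⟧ ∈ w.le → ∀ f : Z ⟶ X, f = 0) : X ∈ w.ge := by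
  obtain ⟨X', X'', a, b, c, hT, hX', hX''⟩ := w.exists_distTriang_shift_mem_le_mem_ge X
  obtain ⟨s, hs⟩ := Triangle.yoneda_exact₂ _ hT (𝟙 X)
    (by change a ≫ 𝟙 X = 0; rw [h X' hX' a, zero_comp])
  exact w.ge_retract b s hs.symm hX''

lemma mem_le_of_distTriang (T : Triangle C) (hT : T ∈ distTriang C)
    (h₁ : T.obj₁ ∈ w.le) (h₃ : T.obj₃ ∈ w.le) : T.obj₂ ∈ w.le := by
  refine w.mem_le_of_forall_hom_eq_zero fun Y hY f ↦ ?_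
  obtain ⟨q, rfl⟩ := Triangle.yoneda_exact₂ T hT f (w.orthogonal h₁ hY _)
  rw [w.orthogonal h₃ hY q, comp_zero]

lemma mem_ge_of_distTriang (T : Triangle C) (hT : T ∈ distTriang C)
    (h₁ : T.obj₁ ∈ w.ge) (h₃ : T.obj₃ ∈ w.ge) : T.obj₂ ∈ w.ge := by
  refine w.mem_ge_of_forall_hom_eq_zero fun Z hZ f ↦ ?_
  obtain ⟨q, rfl⟩ := Triangle.coyoneda_exact₂ T hT f (w.hom_eq_zero_of_shift_mem_le hZ h₃ _)
  rw [w.hom_eq_zero_of_shift_mem_le hZ h₁ q, zero_comp]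

lemma exists_distTriang_mem_heart_of_mem_le {X : C} (hX : X ∈ w.le) :
    ∃ (X' H : C) (a : X' ⟶ X) (p : X ⟶ H) (c : H ⟶ X'⟦(1 : ℤ)⟧),
      Triangle.mk a p c ∈ distTriang C ∧ X'⟦(1 : ℤ)⟧ ∈ w.le ∧ H ∈ w.heart := by
  obtain ⟨X', H, a, p, c, hT, hX', hH⟩ := w.exists_distTriang_shift_mem_le_mem_ge X
  have hHle : H ∈ w.le := w.mem_le_of_distTriang _ (rot_of_distTriang _ hT) hX hX'
  exact ⟨X', H, a, p, c, hT, hX', w.mem_heart_iff.2 ⟨hHle, hH⟩⟩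

lemma exists_distTriang_mem_heart_of_mem_ge {Y : C} (hY : Y ∈ w.ge) :
    ∃ (H Y'' : C) (i : H ⟶ Y) (b : Y ⟶ Y'') (c : Y'' ⟶ H⟦(1 : ℤ)⟧),
      Triangle.mk i b c ∈ distTriang C ∧ H ∈ w.heart ∧ Y''⟦(-1 : ℤ)⟧ ∈ w.ge := by
  obtain ⟨H, Y'', i, b, c, hT, hH, hY''⟩ := w.exists_decomp Y
  have hHge : H ∈ w.ge := w.mem_ge_of_distTriang _ (inv_rot_of_distTriang _ hT) hY'' hY
  exact ⟨H, Y'', i, b, c, hT, w.mem_heart_iff.2 ⟨hH, hHge⟩, hY''⟩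

lemma exists_mor₂_comp_eq_of_mem_ge (T : Triangle C) (hT : T ∈ distTriang C)
    (h₁ : T.obj₁⟦(1 : ℤ)⟧ ∈ w.le) {Z : C} (hZ : Z ∈ w.ge) (φ : T.obj₂ ⟶ Z) :
    ∃ ψ : T.obj₃ ⟶ Z, T.mor₂ ≫ ψ = φ := by
  obtain ⟨ψ, hψ⟩ := Triangle.yoneda_exact₂ T hT φ (w.hom_eq_zero_of_shift_mem_le h₁ hZ _)
  exact ⟨ψ, hψ.symm⟩

lemma exists_comp_mor₁_eq_of_mem_le (T : Triangle C) (hT : T ∈ distTriang C)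
    (h₃ : T.obj₃⟦(-1 : ℤ)⟧ ∈ w.ge) {Z : C} (hZ : Z ∈ w.le) (φ : Z ⟶ T.obj₂) :
    ∃ ψ : Z ⟶ T.obj₁, ψ ≫ T.mor₁ = φ := by
  obtain ⟨ψ, hψ⟩ := Triangle.coyoneda_exact₂ T hT φ (w.orthogonal hZ h₃ _)
  exact ⟨ψ, hψ.symm⟩

end WeightStructure

end

namespace WeightExact

variable {C₁ : Type*} [Category C₁] [Preadditive C₁] [HasZeroObject C₁] [HasShift C₁ ℤ]
  [∀ n : ℤ, (CategoryTheory.shiftFunctor C₁ n).Additive] [Pretriangulated C₁]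
  {C₂ : Type*} [Category C₂] [Preadditive C₂] [HasZeroObject C₂] [HasShift C₂ ℤ]
  [∀ n : ℤ, (CategoryTheory.shiftFunctor C₂ n).Additive] [Pretriangulated C₂]
  {w₁ : WeightStructure C₁} {w₂ : WeightStructure C₂} {r : C₁ ⥤ C₂} [r.CommShift ℤ]

lemma shift_mem_le (hwe : WeightExact w₁ w₂ r) {X : C₁} {n : ℤ} (hX : X⟦n⟧ ∈ w₁.le) :
    (r.obj X)⟦n⟧ ∈ w₂.le :=
  w₂.mem_le_of_iso ((r.commShiftIso n).app X).symm (hwe.1 _ hX)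

lemma shift_mem_ge (hwe : WeightExact w₁ w₂ r) {X : C₁} {n : ℤ} (hX : X⟦n⟧ ∈ w₁.ge) :
    (r.obj X)⟦n⟧ ∈ w₂.ge :=
  w₂.mem_ge_of_iso ((r.commShiftIso n).app X).symm (hwe.2 _ hX)

/-- The morphism factors through the images of heart truncations of `X` and `Y`. -/
lemma exists_map_eq_of_mem_le_of_mem_ge [r.IsTriangulated] (hwe : WeightExact w₁ w₂ r)
    (hfull : ∀ X Y : C₁, X ∈ w₁.heart → Y ∈ w₁.heart →
      ∀ g : r.obj X ⟶ r.obj Y, ∃ f : X ⟶ Y, r.map f = g)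
    {X Y : C₁} (hX : X ∈ w₁.le) (hY : Y ∈ w₁.ge) (φ : r.obj X ⟶ r.obj Y) :
    ∃ f : X ⟶ Y, r.map f = φ := by
  obtain ⟨X', HX, a, p, c, hTX, hX', hHX⟩ := w₁.exists_distTriang_mem_heart_of_mem_le hX
  obtain ⟨HY, Y'', i, b, d, hTY, hHY, hY''⟩ := w₁.exists_distTriang_mem_heart_of_mem_ge hY
  obtain ⟨ψ, rfl⟩ := w₂.exists_comp_mor₁_eq_of_mem_le _ (r.map_distinguished _ hTY)
    (hwe.shift_mem_ge hY'') (hwe.1 _ hX) φ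
  obtain ⟨χ, rfl⟩ := w₂.exists_mor₂_comp_eq_of_mem_ge _ (r.map_distinguished _ hTX)
    (hwe.shift_mem_le hX') (hwe.2 _ (w₁.mem_heart_iff.1 hHY).2) ψ
  obtain ⟨τ, rfl⟩ := hfull _ _ hHX hHY χ
  exact ⟨p ≫ τ ≫ i, by rw [r.map_comp, r.map_comp, ← Category.assoc]; rfl⟩

end WeightExact

lemma isZero_obj_of_inRadical {C D : Type*} [Category C] [Preadditive C] [Category D]
    [Preadditive D] (r : C ⥤ D) [r.Additive] {X Y : C} {f : X ⟶ Y} (hf : InRadical f)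
    [IsIso (r.map f)] {g : Y ⟶ X} (hg : r.map g = inv (r.map f)) : IsZero (r.obj X) := by
  have hiso : IsIso (r.map (𝟙 X - f ≫ g)) := by
    have := hf g
    infer_instance
  have hzero : r.map (𝟙 X - f ≫ g) = 0 := by simp [hg]
  rw [hzero] at hiso
  exact IsZero.of_mono_zero (r.obj X) (r.obj X)

theorem statement15
    (F : Type*) [Field F] [CharZero F]
    {C₁ : Type*} [Category C₁] [Preadditive C₁] [HasZeroObject C₁] [HasShift C₁ ℤ]
    [∀ n : ℤ, (CategoryTheory.shiftFunctor C₁ n).Additive] [Pretriangulated C₁] [CategoryTheory.Linear F C₁]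
    {C₂ : Type*} [Category C₂] [Preadditive C₂] [HasZeroObject C₂] [HasShift C₂ ℤ]
    [∀ n : ℤ, (CategoryTheory.shiftFunctor C₂ n).Additive] [Pretriangulated C₂] [CategoryTheory.Linear F C₂]
    (w₁ : WeightStructure C₁) (w₂ : WeightStructure C₂)
    (r : C₁ ⥤ C₂) [r.Additive] [Functor.Linear F r] [r.CommShift ℤ] [r.IsTriangulated]
    (hwe : WeightExact w₁ w₂ r)
    (hfull : ∀ X Y : C₁, X ∈ w₁.heart → Y ∈ w₁.heart →
      ∀ g : r.obj X ⟶ r.obj Y, ∃ f : X ⟶ Y, r.map f = g)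
    {A M B : C₁} (f : A ⟶ M) (g : M ⟶ B) (δ : B ⟶ A⟦(1 : ℤ)⟧)
    (hmin : IsMinimalWeightFiltrationAt w₁ 0 f g δ)
    (hM : IsZero (r.obj M)) :
    IsZero (r.obj A) ∧ IsZero (r.obj B) := by
  obtain ⟨⟨hT, hA, hB⟩, hrad⟩ := hmin
  have hA1 : A⟦(1 : ℤ)⟧ ∈ w₁.le := by simpa [WeightStructure.leN] using hA
  have hB0 : B ∈ w₁.ge := w₁.mem_geN_zero_iff.1 hB
  have : IsIso (r.map δ) :=
    (Triangle.isZero₁_iff_isIso₂ _ (r.map_distinguished _ (rot_of_distTriang _ hT))).1 hM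
  obtain ⟨g', hg'⟩ := hwe.exists_map_eq_of_mem_le_of_mem_ge hfull hA1 hB0 (inv (r.map δ))
  have hrB : IsZero (r.obj B) := isZero_obj_of_inRadical r hrad hg'
  exact ⟨Triangle.isZero₁_of_isZero₂₃ _ (r.map_distinguished _ hT) hM hrB, hrB⟩

end Paper
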